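/- Let V be a real symmetric positive definite m×m matrix, Σ a real symmetric positive semidefinite m×m matrix, and Δ ∈ ℝ^{n×m} a matrix satisfying ‖Δ V^{1/2}‖_F ≤ β for some β ≥ 0, where V^{1/2} is the positive semidefinite square root of V. Then ‖Δ Σ Δᵀ‖_F ≤ β² · tr(V^{-1} Σ). -/

import Mathlib

open Matrix MeasureTheory ProbabilityTheory Filter

/-- Frobenius norm of a real matrix. -/
noncomputable def frob {α β : Type*} [Fintype α] [Fintype β] (A : Matrix α β ℝ) : ℝ :=
  Real.sqrt (∑ i, ∑ j, (A i j) ^ 2)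

/-- Spectral norm (largest singular value) of a real matrix. -/
noncomputable def spec {α β : Type*} [Fintype α] [Fintype β] [DecidableEq β]
    (A : Matrix α β ℝ) : ℝ :=
  ‖LinearMap.toContinuousLinearMap (Matrix.toEuclideanLin A)‖

/-- The positive semidefinite square root of a positive semidefinite real matrix
(junk value `0` if the matrix is not positive semidefinite). -/
noncomputable def msqrt {α : Type*} [Fintype α] [DecidableEq α]
    (M : Matrix α α ℝ) : Matrix α α ℝ :=
  open scoped Classical in
  if h : M.PosSemidef then
    (h.1.eigenvectorUnitary : Matrix α α ℝ) * diagonal (fun i => Real.sqrt (h.1.eigenvalues i)) *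
      (star h.1.eigenvectorUnitary : Matrix α α ℝ)
  else 0

/-- Euclidean norm of a real vector. -/
noncomputable def vnorm {α : Type*} [Fintype α] (v : α → ℝ) : ℝ :=
  Real.sqrt (∑ i, (v i) ^ 2)

/-!
Factor `Σ = S Sᵀ` and `V = W Wᵀ` with square roots. Then `Δ Σ Δᵀ = (Δ S)(Δ S)ᵀ`, and inserting
`W W⁻¹` gives `‖Δ Σ Δᵀ‖ ≤ ‖Δ S‖² ≤ ‖Δ W‖² ‖W⁻¹ S‖²` by submultiplicativity of the Frobenius norm,
while `‖W⁻¹ S‖² = tr (W⁻¹ Σ W⁻ᵀ) = tr ((W Wᵀ)⁻¹ Σ) = tr (V⁻¹ Σ)`.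
-/

attribute [local instance] Matrix.frobeniusNormedAddCommGroup

section Frobenius

variable {l m n : Type*} [Fintype l] [Fintype m] [Fintype n]

lemma frob_eq_norm (A : Matrix m n ℝ) : frob A = ‖A‖ := by
  simp only [frob, frobenius_norm_def, Real.norm_eq_abs, Real.rpow_two, sq_abs, Real.sqrt_eq_rpow]

lemma frobenius_norm_sq_eq_trace (A : Matrix m n ℝ) : ‖A‖ ^ 2 = (A * Aᵀ).trace := by
  rw [← frob_eq_norm, frob, Real.sq_sqrt (by positivity)]
  simp [trace, mul_apply, sq]

lemma frobenius_norm_mul_transpose_le (A : Matrix m n ℝ) : ‖A * Aᵀ‖ ≤ ‖A‖ ^ 2 := by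
  simpa only [frobenius_norm_transpose, sq] using frobenius_norm_mul A Aᵀ

variable [DecidableEq m]

lemma frobenius_norm_mul_le_of_isUnit_det (A : Matrix l m ℝ) {W : Matrix m m ℝ}
    (hW : IsUnit W.det) (B : Matrix m n ℝ) : ‖A * B‖ ≤ ‖A * W‖ * ‖W⁻¹ * B‖ := by
  simpa only [Matrix.mul_assoc, mul_nonsing_inv_cancel_left _ _ hW] using
    frobenius_norm_mul (A * W) (W⁻¹ * B)

lemma frobenius_norm_inv_mul_sq (W : Matrix m m ℝ) (S : Matrix m n ℝ) :
    ‖W⁻¹ * S‖ ^ 2 = ((W * Wᵀ)⁻¹ * (S * Sᵀ)).trace := by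
  rw [frobenius_norm_sq_eq_trace, transpose_mul, transpose_nonsing_inv, Matrix.mul_inv_rev,
    ← Matrix.mul_assoc, trace_mul_cycle]
  simp only [Matrix.mul_assoc]

theorem frobenius_norm_mul_mul_transpose_le {V Sig W : Matrix m m ℝ} {S : Matrix m n ℝ} {β : ℝ}
    (A : Matrix l m ℝ) (hV : IsUnit V.det) (hWV : W * Wᵀ = V) (hSig : S * Sᵀ = Sig)
    (hA : ‖A * W‖ ≤ β) : ‖A * Sig * Aᵀ‖ ≤ β ^ 2 * (V⁻¹ * Sig).trace := by
  subst hWV hSig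
  have hW : IsUnit W.det := isUnit_of_mul_isUnit_left (by rwa [← det_mul])
  calc ‖A * (S * Sᵀ) * Aᵀ‖ = ‖(A * S) * (A * S)ᵀ‖ := by
        simp only [transpose_mul, Matrix.mul_assoc]
    _ ≤ ‖A * S‖ ^ 2 := frobenius_norm_mul_transpose_le _
    _ ≤ (‖A * W‖ * ‖W⁻¹ * S‖) ^ 2 := by gcongr; exact frobenius_norm_mul_le_of_isUnit_det A hW S
    _ ≤ (β * ‖W⁻¹ * S‖) ^ 2 := by gcongr
    _ = β ^ 2 * ((W * Wᵀ)⁻¹ * (S * Sᵀ)).trace := by rw [mul_pow, frobenius_norm_inv_mul_sq]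

end Frobenius

section SquareRoot

variable {m : Type*} [Fintype m] [DecidableEq m] {M : Matrix m m ℝ}

lemma msqrt_eq_cfc (h : M.PosSemidef) : msqrt M = cfc Real.sqrt M := by
  rw [msqrt, dif_pos h, h.1.cfc_eq, IsHermitian.cfc, Unitary.conjStarAlgAut_apply]
  rfl

lemma msqrt_transpose (h : M.PosSemidef) : (msqrt M)ᵀ = msqrt M := by
  rw [← conjTranspose_eq_transpose_of_trivial, msqrt_eq_cfc h]
  exact (cfc_predicate Real.sqrt M).star_eq

lemma msqrt_mul_transpose_self (h : M.PosSemidef) : msqrt M * (msqrt M)ᵀ = M := by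
  open scoped MatrixOrder in
  rw [msqrt_transpose h, msqrt_eq_cfc h, ← cfc_mul ..]
  exact (cfc_congr fun x hx => Real.mul_self_sqrt (spectrum_nonneg_of_nonneg h.nonneg hx)).trans
    (cfc_id' ℝ M)

end SquareRoot

theorem weighted_quadratic_term_bound_general {n m : ℕ}
    (V Sig : Matrix (Fin m) (Fin m) ℝ) (Δ : Matrix (Fin n) (Fin m) ℝ) (β : ℝ)
    (hV : V.PosDef) (hSig : Sig.PosSemidef)
    (hΔ : frob (Δ * msqrt V) ≤ β) :
    frob (Δ * Sig * Δᵀ) ≤ β ^ 2 * (V⁻¹ * Sig).trace := by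
  rw [frob_eq_norm] at hΔ ⊢
  exact frobenius_norm_mul_mul_transpose_le Δ hV.det_pos.ne'.isUnit
    (msqrt_mul_transpose_self hV.posSemidef) (msqrt_mul_transpose_self hSig) hΔ

theorem weighted_quadratic_term_bound {n m : ℕ}
    (V Sig : Matrix (Fin m) (Fin m) ℝ) (Δ : Matrix (Fin n) (Fin m) ℝ) (β : ℝ)
    (hβ : 0 ≤ β) (hV : V.PosDef) (hSig : Sig.PosSemidef)
    (hΔ : frob (Δ * msqrt V) ≤ β) :
    frob (Δ * Sig * Δᵀ) ≤ β ^ 2 * (V⁻¹ * Sig).trace :=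
  weighted_quadratic_term_bound_general V Sig Δ β hV hSig hΔ
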